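/- For every L ≥ 2, all J, q > 0, every starting configuration σ ∈ S, and every N ≥ 0, the tail of the hitting time of the all-plus configuration is maximal from the all-minus configuration: ∑_{τ ≠ 1} Q^N(σ, τ) ≤ ∑_{τ ≠ 1} Q^N(−1, τ), where Q is the substochastic matrix on S∖{1} obtained by restricting P. -/

import Mathlib

/-!
Given `σ`, the pair Hamiltonian is linear in `τ`: `-H(σ,τ) = ∑ₓ hₓ(σ) τₓ` with local field
`hₓ(σ) = J (σ_{x^d} + σ_{x^l}) + q σₓ`. Hence `P(σ,·)` is a product of Bernoulli laws with
parameters `sigmoid (2 hₓ(σ))`, which increase with `σ` because `J, q ≥ 0`, and a sitewise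
monotone coupling shows that `P` maps antitone functions to antitone functions. The
probability `s_N` of not having hit `1` within `N` steps, extended by `0` at `1`, satisfies
`s_{N+1} = P s_N` away from `1`; since `1` is the maximal configuration, induction on `N` shows
that `s_N` is antitone, and `-1` is the minimal configuration.
-/

open Real Filter MeasureTheory

noncomputable section

/-- A site of the 2d discrete torus `(ℤ/Lℤ)²`. -/
abbrev Site (L : ℕ) := ZMod L × ZMod L

/-- A spin configuration on the torus, `true = +1`, `false = -1`. -/
abbrev Cfg (L : ℕ) := Site L → Bool

/-- The real spin value of a Boolean spin. -/
def spin (b : Bool) : ℝ := if b then 1 else -1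

/-- The up neighbor. -/
def upN {L : ℕ} (x : Site L) : Site L := (x.1, x.2 + 1)
/-- The right neighbor. -/
def rtN {L : ℕ} (x : Site L) : Site L := (x.1 + 1, x.2)
/-- The down neighbor. -/
def dnN {L : ℕ} (x : Site L) : Site L := (x.1, x.2 - 1)
/-- The left neighbor. -/
def lfN {L : ℕ} (x : Site L) : Site L := (x.1 - 1, x.2)

/-- The pair Hamiltonian `H(σ,τ) = −∑_x [J σ_x (τ_{x^u} + τ_{x^r}) + q σ_x τ_x]`. -/
def pairH (L : ℕ) [NeZero L] (J q : ℝ) (σ τ : Cfg L) : ℝ :=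
  - ∑ x : Site L, (J * spin (σ x) * (spin (τ (upN x)) + spin (τ (rtN x)))
      + q * spin (σ x) * spin (τ x))

/-- The normalization `Z_σ = ∑_τ e^{−H(σ,τ)}`. -/
def Zconf (L : ℕ) [NeZero L] (J q : ℝ) (σ : Cfg L) : ℝ :=
  ∑ τ : Cfg L, Real.exp (-(pairH L J q σ τ))

/-- The PCA transition probabilities `P(σ,τ) = e^{−H(σ,τ)}/Z_σ`. -/
def Ptrans (L : ℕ) [NeZero L] (J q : ℝ) (σ τ : Cfg L) : ℝ :=
  Real.exp (-(pairH L J q σ τ)) / Zconf L J q σ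

/-- `Z_PCA = ∑_σ Z_σ`. -/
def Zpca (L : ℕ) [NeZero L] (J q : ℝ) : ℝ := ∑ σ : Cfg L, Zconf L J q σ

/-- The PCA stationary measure `π_PCA(σ) = Z_σ / Z_PCA`. -/
def piPCA (L : ℕ) [NeZero L] (J q : ℝ) (σ : Cfg L) : ℝ := Zconf L J q σ / Zpca L J q

/-- The Ising Hamiltonian `H_G(σ) = −J ∑_{(x,y)} σ_x σ_y`, the sum over (unordered)
nearest-neighbor pairs of the torus, each pair being counted once via its up/right bond. -/
def isingH (L : ℕ) [NeZero L] (J : ℝ) (σ : Cfg L) : ℝ :=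
  - J * ∑ x : Site L, spin (σ x) * (spin (σ (upN x)) + spin (σ (rtN x)))

/-- The Ising partition function. -/
def Zg (L : ℕ) [NeZero L] (J : ℝ) : ℝ := ∑ σ : Cfg L, Real.exp (-(isingH L J σ))

/-- The Ising Gibbs measure `π_G(σ) = e^{−H_G(σ)}/Z_G`. -/
def piG (L : ℕ) [NeZero L] (J : ℝ) (σ : Cfg L) : ℝ := Real.exp (-(isingH L J σ)) / Zg L J

/-- Total variation distance between two measures on configuration space. -/
def tv (L : ℕ) [NeZero L] (μ ν : Cfg L → ℝ) : ℝ := (1/2) * ∑ σ : Cfg L, |μ σ - ν σ|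

/-- The all-plus configuration. -/
def plusCfg (L : ℕ) : Cfg L := fun _ => true
/-- The all-minus configuration. -/
def minusCfg (L : ℕ) : Cfg L := fun _ => false

/-- The substochastic matrix `Q` on `S∖{1}` obtained by restricting `P`. -/
def Qmat (L : ℕ) [NeZero L] (J q : ℝ) :
    Matrix {σ : Cfg L // σ ≠ plusCfg L} {σ : Cfg L // σ ≠ plusCfg L} ℝ :=
  Matrix.of fun σ τ => Ptrans L J q σ.1 τ.1

theorem minus_ne_plus (L : ℕ) [NeZero L] : minusCfg L ≠ plusCfg L :=
  fun h => Bool.false_ne_true (congrFun h (0, 0))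

open Matrix

lemma Matrix.submatrix_mulVec_eq_mulVec_extend {α β R : Type*} [Fintype α] [Fintype β]
    [Semiring R] (P : Matrix α α R) {e : β → α} (he : Function.Injective e) (v : β → R)
    (i : β) : (P.submatrix e e *ᵥ v) i = (P *ᵥ Function.extend e v 0) (e i) := by
  refine Fintype.sum_of_injective e he _ _ (fun j hj => ?_) fun j => by rw [he.extend_apply]; rfl
  rw [Function.extend_apply' _ _ _ (by simpa using hj), Pi.zero_apply, mul_zero]

section Survival

variable {α R : Type*} [Fintype α] [DecidableEq α] [Semiring R]

def killedAt (P : Matrix α α R) (a : α) : Matrix {x // x ≠ a} {x // x ≠ a} R :=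
  P.submatrix Subtype.val Subtype.val

/-- The probability that the chain started at `x` has not hit `a` within `N` steps
(`0` for `x = a`). -/
def survival (P : Matrix α α R) (a : α) (N : ℕ) : α → R :=
  Function.extend Subtype.val (killedAt P a ^ N *ᵥ 1) 0

variable {P : Matrix α α R} {a : α}

lemma survival_coe (N : ℕ) (x : {x // x ≠ a}) :
    survival P a N x = (killedAt P a ^ N *ᵥ 1) x :=
  Subtype.val_injective.extend_apply _ _ x

lemma survival_apply (N : ℕ) (x : {x // x ≠ a}) :
    survival P a N x = ∑ y, (killedAt P a ^ N) x y := by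
  simp [survival_coe, mulVec, dotProduct]

lemma survival_self (N : ℕ) : survival P a N a = 0 :=
  Function.extend_apply' _ _ _ fun ⟨x, hx⟩ => x.2 hx

lemma survival_zero_of_ne {x : α} (hx : x ≠ a) : survival P a 0 x = 1 := by
  rw [survival_coe 0 ⟨x, hx⟩, pow_zero, one_mulVec, Pi.one_apply]

lemma survival_succ_of_ne (N : ℕ) {x : α} (hx : x ≠ a) :
    survival P a (N + 1) x = (P *ᵥ survival P a N) x := by
  rw [survival_coe (N + 1) ⟨x, hx⟩, pow_succ', ← mulVec_mulVec, killedAt,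
    submatrix_mulVec_eq_mulVec_extend _ Subtype.val_injective]
  rfl

variable [PartialOrder R] [IsOrderedRing R]

lemma survival_nonneg (hP : ∀ x y, 0 ≤ P x y) (N : ℕ) : 0 ≤ survival P a N := by
  induction N with
  | zero =>
    intro x
    by_cases hx : x = a
    · rw [hx, survival_self]; exact le_rfl
    · rw [survival_zero_of_ne hx]; exact zero_le_one
  | succ N ih =>
    intro x
    by_cases hx : x = a
    · rw [hx, survival_self]; exact le_rfl
    · rw [survival_succ_of_ne N hx]; exact dotProduct_nonneg_of_nonneg (hP x) ih

lemma antitone_survival [PartialOrder α] (ha : IsMax a) (hP : ∀ x y, 0 ≤ P x y)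
    (hmono : ∀ f : α → R, Antitone f → Antitone (P *ᵥ f)) (N : ℕ) :
    Antitone (survival P a N) := by
  intro x y hxy
  by_cases hy : y = a
  · rw [hy, survival_self]; exact survival_nonneg hP N x
  have hx : x ≠ a := fun hx => hy (ha.eq_of_le (hx ▸ hxy)).symm
  cases N with
  | zero => rw [survival_zero_of_ne hx, survival_zero_of_ne hy]
  | succ N =>
    rw [survival_succ_of_ne N hx, survival_succ_of_ne N hy]
    exact hmono _ (antitone_survival ha hP hmono N) hxy

end Survival

section BernoulliCoupling

def bernoulliWeight (p : ℝ) (b : Bool) : ℝ := if b then p else 1 - p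

/-- The monotone coupling of the Bernoulli laws with parameters `p ≤ p'`. -/
def bernoulliCoupling (p p' : ℝ) : Bool → Bool → ℝ
  | true, true => p
  | true, false => 0
  | false, true => p' - p
  | false, false => 1 - p'

variable {p p' : ℝ}

lemma bernoulliCoupling_nonneg (h0 : 0 ≤ p) (hp : p ≤ p') (h1 : p' ≤ 1) (b b' : Bool) :
    0 ≤ bernoulliCoupling p p' b b' := by
  cases b <;> cases b' <;> simp only [bernoulliCoupling] <;> linarith

lemma le_of_bernoulliCoupling_ne_zero {b b' : Bool} (h : bernoulliCoupling p p' b b' ≠ 0) :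
    b ≤ b' := by
  cases b <;> cases b' <;> simp_all [bernoulliCoupling]

lemma sum_bernoulliCoupling_right (p p' : ℝ) (b : Bool) :
    ∑ b', bernoulliCoupling p p' b b' = bernoulliWeight p b := by
  cases b <;> simp [bernoulliCoupling, bernoulliWeight]

lemma sum_bernoulliCoupling_left (p p' : ℝ) (b' : Bool) :
    ∑ b, bernoulliCoupling p p' b b' = bernoulliWeight p' b' := by
  cases b' <;> simp [bernoulliCoupling, bernoulliWeight]

variable {ι : Type*} [Fintype ι] [DecidableEq ι]

theorem sum_prod_bernoulliWeight_mul_le_of_antitone {p p' : ι → ℝ} (h0 : ∀ i, 0 ≤ p i)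
    (hp : p ≤ p') (h1 : ∀ i, p' i ≤ 1) {f : (ι → Bool) → ℝ} (hf : Antitone f) :
    ∑ ρ, (∏ i, bernoulliWeight (p' i) (ρ i)) * f ρ
      ≤ ∑ ρ, (∏ i, bernoulliWeight (p i) (ρ i)) * f ρ := by
  let c : (ι → Bool) → (ι → Bool) → ℝ := fun ρ ρ' =>
    ∏ i, bernoulliCoupling (p i) (p' i) (ρ i) (ρ' i)
  have marginal_left (ρ' : ι → Bool) : ∑ ρ, c ρ ρ' = ∏ i, bernoulliWeight (p' i) (ρ' i) := by
    simp only [c, ← Fintype.prod_sum (fun i b => bernoulliCoupling (p i) (p' i) b (ρ' i)),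
      sum_bernoulliCoupling_left]
  have marginal_right (ρ : ι → Bool) : ∑ ρ', c ρ ρ' = ∏ i, bernoulliWeight (p i) (ρ i) := by
    simp only [c, ← Fintype.prod_sum (fun i b' => bernoulliCoupling (p i) (p' i) (ρ i) b'),
      sum_bernoulliCoupling_right]
  have coupled (ρ ρ' : ι → Bool) : c ρ ρ' * f ρ' ≤ c ρ ρ' * f ρ := by
    by_cases hc : c ρ ρ' = 0
    · rw [hc, zero_mul, zero_mul]
    have hle : ρ ≤ ρ' := fun i =>
      le_of_bernoulliCoupling_ne_zero (Finset.prod_ne_zero_iff.mp hc i (Finset.mem_univ i))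
    exact mul_le_mul_of_nonneg_left (hf hle) <| Finset.prod_nonneg fun i _ =>
      bernoulliCoupling_nonneg (h0 i) (hp i) (h1 i) _ _
  calc ∑ ρ', (∏ i, bernoulliWeight (p' i) (ρ' i)) * f ρ'
      = ∑ ρ', ∑ ρ, c ρ ρ' * f ρ' := by simp only [← marginal_left, Finset.sum_mul]
    _ ≤ ∑ ρ', ∑ ρ, c ρ ρ' * f ρ :=
      Finset.sum_le_sum fun ρ' _ => Finset.sum_le_sum fun ρ _ => coupled ρ ρ'
    _ = ∑ ρ, ∑ ρ', c ρ ρ' * f ρ := Finset.sum_comm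
    _ = ∑ ρ, (∏ i, bernoulliWeight (p i) (ρ i)) * f ρ := by
      simp only [← Finset.sum_mul, marginal_right]

end BernoulliCoupling

lemma Real.exp_div_exp_add_exp_neg (a : ℝ) : exp a / (exp a + exp (-a)) = sigmoid (2 * a) := by
  have h : exp (-(2 * a)) = exp (-a) / exp a := by rw [← exp_sub]; ring_nf
  rw [sigmoid_def, h]
  field_simp

lemma spin_monotone : Monotone spin := by
  rintro (_ | _) (_ | _) h <;> first | exact absurd h (by decide) | norm_num [spin]

lemma exp_mul_spin_div_sum (a : ℝ) (b : Bool) :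
    exp (a * spin b) / ∑ b', exp (a * spin b') = bernoulliWeight (sigmoid (2 * a)) b := by
  cases b
  · simpa [spin, bernoulliWeight, add_comm, sigmoid_neg] using exp_div_exp_add_exp_neg (-a)
  · simpa [spin, bernoulliWeight] using exp_div_exp_add_exp_neg a

section PCA

variable {L : ℕ} {J q : ℝ}

lemma upN_eq_add (x : Site L) : upN x = x + (0, 1) := Prod.ext (add_zero _).symm rfl
lemma rtN_eq_add (x : Site L) : rtN x = x + (1, 0) := Prod.ext rfl (add_zero _).symm
lemma dnN_eq_sub (x : Site L) : dnN x = x - (0, 1) := Prod.ext (sub_zero _).symm rfl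
lemma lfN_eq_sub (x : Site L) : lfN x = x - (1, 0) := Prod.ext rfl (sub_zero _).symm

variable (J q) in
def localField (σ : Cfg L) (x : Site L) : ℝ :=
  J * (spin (σ (dnN x)) + spin (σ (lfN x))) + q * spin (σ x)

lemma localField_mono (hJ : 0 ≤ J) (hq : 0 ≤ q) {σ σ' : Cfg L} (h : σ ≤ σ') (x : Site L) :
    localField J q σ x ≤ localField J q σ' x := by
  unfold localField
  gcongr <;> exact spin_monotone (h _)

variable [NeZero L]

lemma sum_apply_add_eq_sum_sub_apply (f : Site L → Site L → ℝ) (v : Site L) :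
    ∑ x, f x (x + v) = ∑ x, f (x - v) x :=
  Fintype.sum_equiv (Equiv.addRight v) _ _ fun x => by simp

lemma neg_pairH_eq_sum_localField (σ τ : Cfg L) :
    -pairH L J q σ τ = ∑ x, localField J q σ x * spin (τ x) := by
  have hu : ∑ x, J * spin (σ x) * spin (τ (upN x)) = ∑ x, J * spin (σ (dnN x)) * spin (τ x) := by
    simp only [upN_eq_add, dnN_eq_sub]
    exact sum_apply_add_eq_sum_sub_apply (fun x y => J * spin (σ x) * spin (τ y)) _
  have hr : ∑ x, J * spin (σ x) * spin (τ (rtN x)) = ∑ x, J * spin (σ (lfN x)) * spin (τ x) := by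
    simp only [rtN_eq_add, lfN_eq_sub]
    exact sum_apply_add_eq_sum_sub_apply (fun x y => J * spin (σ x) * spin (τ y)) _
  calc -pairH L J q σ τ
      = ∑ x, J * spin (σ x) * spin (τ (upN x)) + ∑ x, J * spin (σ x) * spin (τ (rtN x))
          + ∑ x, q * spin (σ x) * spin (τ x) := by
        simp only [pairH, neg_neg, ← Finset.sum_add_distrib]
        exact Finset.sum_congr rfl fun x _ => by ring
    _ = ∑ x, J * spin (σ (dnN x)) * spin (τ x) + ∑ x, J * spin (σ (lfN x)) * spin (τ x)
          + ∑ x, q * spin (σ x) * spin (τ x) := by rw [hu, hr]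
    _ = ∑ x, localField J q σ x * spin (τ x) := by
        simp only [localField, ← Finset.sum_add_distrib]
        exact Finset.sum_congr rfl fun x _ => by ring

lemma Ptrans_eq_prod_bernoulliWeight (σ ρ : Cfg L) :
    Ptrans L J q σ ρ = ∏ x, bernoulliWeight (sigmoid (2 * localField J q σ x)) (ρ x) := by
  have hexp (τ : Cfg L) :
      exp (-pairH L J q σ τ) = ∏ x, exp (localField J q σ x * spin (τ x)) := by
    rw [neg_pairH_eq_sum_localField, exp_sum]
  have hZ : Zconf L J q σ = ∏ x, ∑ b, exp (localField J q σ x * spin b) := by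
    rw [Zconf, Fintype.prod_sum]
    simp only [hexp]
  rw [Ptrans, hexp, hZ, ← Finset.prod_div_distrib]
  exact Finset.prod_congr rfl fun x _ => exp_mul_spin_div_sum _ _

lemma Ptrans_nonneg (σ τ : Cfg L) : 0 ≤ Ptrans L J q σ τ := by
  unfold Ptrans Zconf
  positivity

lemma antitone_Ptrans_mulVec (hJ : 0 ≤ J) (hq : 0 ≤ q) {f : Cfg L → ℝ} (hf : Antitone f) :
    Antitone (Matrix.of (Ptrans L J q) *ᵥ f) := fun σ σ' h => by
  simp only [mulVec, dotProduct, of_apply, Ptrans_eq_prod_bernoulliWeight]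
  exact sum_prod_bernoulliWeight_mul_le_of_antitone (fun _ => sigmoid_nonneg _)
    (fun x => sigmoid_le (mul_le_mul_of_nonneg_left (localField_mono hJ hq h x) zero_le_two))
    (fun _ => sigmoid_le_one _) hf

end PCA

theorem stmt12_general (L : ℕ) [NeZero L] (J q : ℝ) (hJ : 0 < J) (hq : 0 < q)
    (N : ℕ) (σ : {σ : Cfg L // σ ≠ plusCfg L}) :
    ∑ τ : {σ : Cfg L // σ ≠ plusCfg L}, (Qmat L J q ^ N) σ τ
      ≤ ∑ τ : {σ : Cfg L // σ ≠ plusCfg L},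
          (Qmat L J q ^ N) ⟨minusCfg L, minus_ne_plus L⟩ τ := by
  have hQ : Qmat L J q = killedAt (Matrix.of (Ptrans L J q)) (plusCfg L) := rfl
  have hplus : IsMax (plusCfg L) := fun τ _ x => Bool.le_true (τ x)
  have hminus : minusCfg L ≤ σ := fun x => Bool.false_le _
  rw [hQ, ← survival_apply, ← survival_apply]
  exact antitone_survival hplus (fun _ _ => Ptrans_nonneg _ _)
    (fun _ => antitone_Ptrans_mulVec hJ.le hq.le) N hminus

/-- For every `L ≥ 2`, `J, q > 0`, every starting configuration
`σ ∈ S∖{1}` and every `N ≥ 0`, the tail of the hitting time of the all-plus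
configuration is maximal from the all-minus configuration:
`∑_{τ≠1} Q^N(σ,τ) ≤ ∑_{τ≠1} Q^N(−1,τ)`. -/
theorem stmt12 (L : ℕ) [NeZero L] (hL : 2 ≤ L) (J q : ℝ) (hJ : 0 < J) (hq : 0 < q)
    (N : ℕ) (σ : {σ : Cfg L // σ ≠ plusCfg L}) :
    ∑ τ : {σ : Cfg L // σ ≠ plusCfg L}, (Qmat L J q ^ N) σ τ
      ≤ ∑ τ : {σ : Cfg L // σ ≠ plusCfg L},
          (Qmat L J q ^ N) ⟨minusCfg L, minus_ne_plus L⟩ τ :=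
  stmt12_general L J q hJ hq N σ
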